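/- arXiv:2101.06170 — 4 statements merged into one kernel-verified Lean document; each statement's English description precedes it below -/
import Mathlib

section
/- The function l(a,b) = (1/4)((a-1)^2 + (b-1)^2) + (1/2)|ab| on ℝ² attains its minimum value 1/4, and this minimum is attained exactly at the points with a ≥ 0, b ≥ 0, and a + b = 1. -/
/-! With `s = a + b` one has `(a - 1)^2 + (b - 1)^2 = (s - 1)^2 + 1 - 2ab`, so
`l (a, b) - 1/4 = (s - 1)^2 / 4 + (|ab| - ab) / 2`, a sum of two nonnegative terms. It vanishes
iff `a + b = 1` and `ab ≥ 0`, and two numbers with sum `1` and nonnegative product are both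
nonnegative. -/

noncomputable def l : ℝ × ℝ → ℝ :=
  fun p => ((p.1 - 1) ^ 2 + (p.2 - 1) ^ 2) / 4 + |p.1 * p.2| / 2

theorem l_sub_one_fourth (a b : ℝ) :
    l (a, b) - 1 / 4 = (a + b - 1) ^ 2 / 4 + (|a * b| - a * b) / 2 := by
  simp only [l]
  ring

theorem mul_nonneg_iff_of_add_eq_one {R : Type*} [Ring R] [LinearOrder R] [IsStrictOrderedRing R]
    {a b : R} (h : a + b = 1) : 0 ≤ a * b ↔ 0 ≤ a ∧ 0 ≤ b := by
  refine ⟨fun hab => ?_, fun ⟨ha, hb⟩ => mul_nonneg ha hb⟩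
  rcases mul_nonneg_iff.mp hab with hpos | ⟨ha, hb⟩
  · exact hpos
  · have : a + b ≤ 0 := add_nonpos ha hb
    rw [h] at this
    exact absurd this (not_le.mpr one_pos)

theorem stmt_0 :
    (∀ a b : ℝ, 1 / 4 ≤ l (a, b)) ∧
    (∀ a b : ℝ, l (a, b) = 1 / 4 ↔ 0 ≤ a ∧ 0 ≤ b ∧ a + b = 1) := by
  have hsq (a b : ℝ) : 0 ≤ (a + b - 1) ^ 2 / 4 := by positivity
  have habs (a b : ℝ) : 0 ≤ (|a * b| - a * b) / 2 := by
    linarith [le_abs_self (a * b)]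
  refine ⟨fun a b => by linarith [l_sub_one_fourth a b, hsq a b, habs a b], fun a b => ?_⟩
  rw [← sub_eq_zero, l_sub_one_fourth, add_eq_zero_iff_of_nonneg (hsq a b) (habs a b)]
  constructor
  · rintro ⟨hs, hp⟩
    have hsum : a + b = 1 := by nlinarith
    have hprod : 0 ≤ a * b := by
      rw [← abs_eq_self]
      linarith
    obtain ⟨ha, hb⟩ := (mul_nonneg_iff_of_add_eq_one hsum).mp hprod
    exact ⟨ha, hb, hsum⟩
  · rintro ⟨ha, hb, hsum⟩
    rw [hsum, abs_of_nonneg (mul_nonneg ha hb)]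
    norm_num
end

section
/- Let S be the 3×3 real matrix with rows (0, β₁, α₃), (α₁, γ₂, 0), (β₃, 0, -γ₂), and suppose α₁β₁ = α₃β₃ = -(γ₂² + E)/2 for some real E. Then S³ = -E·S. -/
theorem stmt_4 (α₁ α₃ β₁ β₃ γ₂ E : ℝ)
    (h1 : α₁ * β₁ = α₃ * β₃) (h2 : α₁ * β₁ = -(γ₂ ^ 2 + E) / 2)
    (S : Matrix (Fin 3) (Fin 3) ℝ)
    (hS : S = !![0, β₁, α₃; α₁, γ₂, 0; β₃, 0, -γ₂]) :
    S ^ 3 = -E • S := by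
  subst hS
  have h3 : α₃ * β₃ = -(γ₂ ^ 2 + E) / 2 := h1 ▸ h2
  ext i j
  rw [pow_succ, pow_two]
  fin_cases i <;> fin_cases j <;>
    simp [Matrix.mul_apply, Fin.sum_univ_succ, Matrix.smul_apply]
  · linear_combination γ₂ * h1
  · linear_combination β₁ * h2 + β₁ * h3
  · linear_combination α₃ * h2 + α₃ * h3
  · linear_combination α₁ * h2 + α₁ * h3
  · linear_combination 2 * γ₂ * h2
  · ring
  · linear_combination β₃ * h2 + β₃ * h3
  · ring
  · linear_combination (-2 : ℝ) * γ₂ * h3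
end

section
/- Let S be a 3×3 real matrix and E > 0 a real number such that S³ = -E·S. Then for all t ∈ ℝ, exp(t·S) = I + (sin(t√E)/√E)·S + ((1 - cos(t√E))/E)·S². -/
/-! Since `S³ = -E S`, the powers of `S` satisfy `S^(2k+1) = (-E)^k S` and `S^(2k+2) = (-E)^k S²`.
Grouping the exponential series of `tS` by parity therefore turns the odd terms into the sine
series at `t√E` times `S/√E`, and the even terms after the constant `1` into the series of
`1 - cos(t√E)` times `S²/E`. -/

open NormedSpace Nat

section PowThree

variable {R A : Type*} [CommSemiring R] [Semiring A] [Algebra R A]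

theorem pow_two_mul_add_one_of_pow_three_eq_smul {a : A} {c : R} (h : a ^ 3 = c • a) (k : ℕ) :
    a ^ (2 * k + 1) = c ^ k • a := by
  induction k with
  | zero => simp
  | succ k ih =>
    rw [show 2 * (k + 1) + 1 = 2 * k + 1 + 2 by ring, pow_add, ih, smul_mul_assoc, ← pow_succ' a 2,
      h, smul_smul, ← pow_succ]

theorem pow_two_mul_add_two_of_pow_three_eq_smul {a : A} {c : R} (h : a ^ 3 = c • a) (k : ℕ) :
    a ^ (2 * k + 2) = c ^ k • a ^ 2 := by
  rw [pow_succ, pow_two_mul_add_one_of_pow_three_eq_smul h, smul_mul_assoc, ← sq]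

end PowThree

theorem Real.hasSum_sin_mul_div (t : ℝ) {ω : ℝ} (hω : ω ≠ 0) :
    HasSum (fun k : ℕ => t ^ (2 * k + 1) * (-ω ^ 2) ^ k / (2 * k + 1)!)
      (Real.sin (t * ω) / ω) := by
  have hsin : HasSum (fun k : ℕ => (-1) ^ k * (t * ω) ^ (2 * k + 1) / (2 * k + 1)! / ω)
      (Real.sin (t * ω) / ω) :=
    (Real.hasSum_sin (t * ω)).div_const ω
  convert hsin using 2 with k
  field_simp
  ring

theorem Real.hasSum_one_sub_cos_mul_div (t : ℝ) {ω : ℝ} (hω : ω ≠ 0) :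
    HasSum (fun k : ℕ => t ^ (2 * k + 2) * (-ω ^ 2) ^ k / (2 * k + 2)!)
      ((1 - Real.cos (t * ω)) / ω ^ 2) := by
  have hcos : HasSum (fun k : ℕ => (-1) ^ (k + 1) * (t * ω) ^ (2 * (k + 1)) / (2 * (k + 1))!)
      (Real.cos (t * ω) - 1) := by
    simpa using (hasSum_nat_add_iff' 1).mpr (Real.hasSum_cos (t * ω))
  rw [show (1 - Real.cos (t * ω)) / ω ^ 2 = -(Real.cos (t * ω) - 1) / ω ^ 2 by ring]
  have hcos' : HasSum
      (fun k : ℕ => -((-1) ^ (k + 1) * (t * ω) ^ (2 * (k + 1)) / (2 * (k + 1))!) / ω ^ 2)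
      (-(Real.cos (t * ω) - 1) / ω ^ 2) :=
    hcos.neg.div_const (ω ^ 2)
  convert hcos' using 2 with k
  rw [show 2 * (k + 1) = 2 * k + 2 by ring]
  field_simp
  ring

theorem NormedSpace.exp_smul_of_pow_three_eq_neg_sq_smul {A : Type*} [Ring A] [Algebra ℝ A]
    [TopologicalSpace A] [IsTopologicalRing A] [ContinuousSMul ℝ A] [T2Space A]
    {a : A} {ω : ℝ} (hω : ω ≠ 0) (ha : a ^ 3 = -ω ^ 2 • a) (t : ℝ) :
    exp (t • a) =
      1 + (Real.sin (t * ω) / ω) • a + ((1 - Real.cos (t * ω)) / ω ^ 2) • a ^ 2 := by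
  set f : ℕ → A := fun n => (n ! : ℝ)⁻¹ • (t • a) ^ n
  have hodd : HasSum (fun k => f (2 * k + 1)) ((Real.sin (t * ω) / ω) • a) := by
    convert (Real.hasSum_sin_mul_div t hω).smul_const a using 2 with k
    simp only [f, smul_pow, pow_two_mul_add_one_of_pow_three_eq_smul ha, smul_smul]
    ring_nf
  have heven : HasSum (fun k => f (2 * (k + 1))) (((1 - Real.cos (t * ω)) / ω ^ 2) • a ^ 2) := by
    convert (Real.hasSum_one_sub_cos_mul_div t hω).smul_const (a ^ 2) using 2 with k
    simp only [f, mul_add, mul_one, smul_pow, pow_two_mul_add_two_of_pow_three_eq_smul ha,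
      smul_smul]
    ring_nf
  have hexp := heven.zero_add.even_add_odd hodd
  rw [exp_eq_tsum ℝ]
  change ∑' n, f n = _
  rw [hexp.tsum_eq]
  simp only [f, mul_zero, pow_zero, factorial_zero, cast_one, inv_one, one_smul]
  abel

theorem stmt_5 (S : Matrix (Fin 3) (Fin 3) ℝ) (E : ℝ) (hE : 0 < E)
    (hS : S ^ 3 = -E • S) (t : ℝ) :
    exp (t • S) =
      1 + (Real.sin (t * Real.sqrt E) / Real.sqrt E) • S +
        ((1 - Real.cos (t * Real.sqrt E)) / E) • S ^ 2 := by
  have hsq : Real.sqrt E ^ 2 = E := Real.sq_sqrt hE.le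
  have h := exp_smul_of_pow_three_eq_neg_sq_smul (Real.sqrt_pos.mpr hE).ne' (hsq ▸ hS) t
  rwa [hsq] at h
end

section
/- Let S be the 3×3 matrix with rows (0, 0, ν-1), (ν, 1, 0), (0, 0, -1) for 0 < ν < 1, and τ = log 2. Then exp(τS) has rows (1, 0, -(1-ν)/2), (ν, 2, -ν(1-ν)/4), (0, 0, 1/2), and exp(-τSᵀ) has rows (1, -ν/2, 0), (0, 1/2, 0), (1-ν, -ν(1-ν)/4, 2). In particular (exp(τS))₂₁ = ν and (exp(-τSᵀ))₃₁ = 1 - ν. -/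
open NormedSpace Matrix
open scoped Nat

/-! If `A ^ 3 = A`, the powers of `A` alternate between `A` and `A ^ 2` from `n = 1` on, so the
exponential series of `t • A` splits into the odd part `sinh t • A` and the even part
`1 + (cosh t - 1) • A ^ 2`. For the model matrix and `t = ± log 2` this gives the closed forms
with `sinh (log 2) = 3 / 4` and `cosh (log 2) = 5 / 4`. -/

section PowThreeEqSelf

variable {M : Type*} [Monoid M] {a : M}

lemma pow_two_mul_add_one_of_pow_three_eq_self (ha : a ^ 3 = a) (k : ℕ) : a ^ (2 * k + 1) = a := by
  induction k with
  | zero => simp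
  | succ k ih => rw [show 2 * (k + 1) + 1 = 2 * k + 1 + 2 by ring, pow_add, ih, ← pow_succ', ha]

lemma pow_two_mul_succ_of_pow_three_eq_self (ha : a ^ 3 = a) (k : ℕ) :
    a ^ (2 * (k + 1)) = a ^ 2 := by
  rw [mul_add_one, pow_succ, pow_two_mul_add_one_of_pow_three_eq_self ha, sq]

end PowThreeEqSelf

lemma exp_smul_of_pow_three_eq_self {𝔸 : Type*} [Ring 𝔸] [Algebra ℝ 𝔸] [TopologicalSpace 𝔸]
    [IsTopologicalRing 𝔸] [ContinuousSMul ℝ 𝔸] [T2Space 𝔸] {A : 𝔸} (hA : A ^ 3 = A) (t : ℝ) :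
    exp (t • A) = 1 + Real.sinh t • A + (Real.cosh t - 1) • A ^ 2 := by
  rw [exp_eq_tsum ℝ]
  refine HasSum.tsum_eq ?_
  have heven : HasSum (fun k : ℕ => ((2 * k)! : ℝ)⁻¹ • (t • A) ^ (2 * k))
      (1 + (Real.cosh t - 1) • A ^ 2) := by
    convert (hasSum_ite_eq 0 (1 - A ^ 2)).add ((Real.hasSum_cosh t).smul_const (A ^ 2)) using 1
    · ext (_ | k)
      · simp
      · simp [smul_pow, pow_two_mul_succ_of_pow_three_eq_self hA, smul_smul, div_eq_inv_mul]
    · rw [sub_smul, one_smul]; abel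
  have hodd : HasSum (fun k : ℕ => ((2 * k + 1)! : ℝ)⁻¹ • (t • A) ^ (2 * k + 1))
      (Real.sinh t • A) := by
    convert (Real.hasSum_sinh t).smul_const A using 2 with k
    simp [smul_pow, pow_two_mul_add_one_of_pow_three_eq_self hA, smul_smul, div_eq_inv_mul]
  convert HasSum.even_add_odd (f := fun n => (n ! : ℝ)⁻¹ • (t • A) ^ n) heven hodd using 1
  abel

lemma model_pow_three (ν : ℝ) :
    (!![0, 0, ν - 1; ν, 1, 0; 0, 0, -1] : Matrix (Fin 3) (Fin 3) ℝ) ^ 3 =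
      !![0, 0, ν - 1; ν, 1, 0; 0, 0, -1] := by
  ext i j
  fin_cases i <;> fin_cases j <;> simp [pow_succ, mul_apply, Fin.sum_univ_three]

theorem stmt_11_general (ν : ℝ)
    (τ : ℝ) (hτ : τ = Real.log 2)
    (S : Matrix (Fin 3) (Fin 3) ℝ)
    (hS : S = !![0, 0, ν - 1; ν, 1, 0; 0, 0, -1]) :
    exp (τ • S) =
      !![1, 0, -(1 - ν) / 2; ν, 2, -(ν * (1 - ν)) / 4; 0, 0, 1 / 2] ∧
    exp ((-τ) • Sᵀ) =
      !![1, -ν / 2, 0; 0, 1 / 2, 0; 1 - ν, -(ν * (1 - ν)) / 4, 2] ∧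
    exp (τ • S) 1 0 = ν ∧ exp ((-τ) • Sᵀ) 2 0 = 1 - ν := by
  have hS3 : S ^ 3 = S := hS ▸ model_pow_three ν
  have hST3 : Sᵀ ^ 3 = Sᵀ := by rw [← transpose_pow, hS3]
  have hsinh : Real.sinh τ = 3 / 4 := by rw [hτ, Real.sinh_log two_pos]; norm_num
  have hcosh : Real.cosh τ = 5 / 4 := by rw [hτ, Real.cosh_log two_pos]; norm_num
  have hexp : exp (τ • S) =
      !![1, 0, -(1 - ν) / 2; ν, 2, -(ν * (1 - ν)) / 4; 0, 0, 1 / 2] := by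
    rw [exp_smul_of_pow_three_eq_self hS3, hsinh, hcosh, hS]
    ext i j
    fin_cases i <;> fin_cases j <;> simp [sq, one_apply] <;> ring
  have hexpT : exp ((-τ) • Sᵀ) =
      !![1, -ν / 2, 0; 0, 1 / 2, 0; 1 - ν, -(ν * (1 - ν)) / 4, 2] := by
    rw [exp_smul_of_pow_three_eq_self hST3, Real.sinh_neg, Real.cosh_neg, hsinh, hcosh, hS]
    ext i j
    fin_cases i <;> fin_cases j <;> simp [sq, mul_apply, Fin.sum_univ_three, one_apply] <;> ring
  exact ⟨hexp, hexpT, by rw [hexp]; simp, by rw [hexpT]; simp⟩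

theorem stmt_11 (ν : ℝ) (hν0 : 0 < ν) (hν1 : ν < 1)
    (τ : ℝ) (hτ : τ = Real.log 2)
    (S : Matrix (Fin 3) (Fin 3) ℝ)
    (hS : S = !![0, 0, ν - 1; ν, 1, 0; 0, 0, -1]) :
    exp (τ • S) =
      !![1, 0, -(1 - ν) / 2; ν, 2, -(ν * (1 - ν)) / 4; 0, 0, 1 / 2] ∧
    exp ((-τ) • Sᵀ) =
      !![1, -ν / 2, 0; 0, 1 / 2, 0; 1 - ν, -(ν * (1 - ν)) / 4, 2] ∧
    exp (τ • S) 1 0 = ν ∧ exp ((-τ) • Sᵀ) 2 0 = 1 - ν :=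
  stmt_11_general ν τ hτ S hS
end
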